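/- Suppose that f(x) ∈ K[x] is a polynomial with deg(f) < p. Then there exists t₀ ∈ ℕ such that ν(f(c_t)) = ν(f(c_{t₀})) for all t ≥ t₀. -/

import Mathlib

noncomputable section

namespace Erratic

/-- A real-valued (rank at most one) valuation on a field `M`.  The value `v 0 = 0`
is a junk value. -/
structure RealValuation (M : Type*) [Field M] where
  v : M → ℝ
  map_zero' : v 0 = 0
  map_one' : v 1 = 0
  map_mul' : ∀ x y : M, x ≠ 0 → y ≠ 0 → v (x * y) = v x + v y
  map_add' : ∀ x y : M, x + y ≠ 0 → min (v x) (v y) ≤ v (x + y)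

variable {M : Type*} [Field M]

/-- `ω` is the unique (real-valued) valuation of `M` restricting to the given valuation
on the subfield with carrier set `F`. -/
def UniqueExtensionFrom (ω : RealValuation M) (F : Set M) : Prop :=
  ∀ ω' : RealValuation M, (∀ z ∈ F, ω'.v z = ω.v z) → ∀ z : M, ω'.v z = ω.v z

/-- The extension of valued fields `(F, ω|_F) → (M, ω)` is immediate: it has the same
value group and the same residue field. -/
def ImmediateFrom (ω : RealValuation M) (F : Set M) : Prop :=
  (∀ z : M, z ≠ 0 → ∃ w ∈ F, w ≠ 0 ∧ ω.v w = ω.v z) ∧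
  (∀ z : M, 0 ≤ ω.v z → ∃ w ∈ F, z = w ∨ 0 < ω.v (z - w))

end Erratic

namespace Erratic

variable {M : Type*} [Field M] (ω : RealValuation M)

lemma v_neg (x : M) : ω.v (-x) = ω.v x := by
  rcases eq_or_ne x 0 with rfl | hx
  · simp
  have h1 : ω.v ((-1 : M) * -1) = ω.v (-1) + ω.v (-1) :=
    ω.map_mul' _ _ (by simp) (by simp)
  simp only [neg_mul, one_mul, neg_neg] at h1
  rw [ω.map_one'] at h1
  have hv1 : ω.v (-1 : M) = 0 := by linarith
  have h2 : ω.v ((-1 : M) * x) = ω.v (-1) + ω.v x := ω.map_mul' _ _ (by simp) hx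
  rw [neg_one_mul] at h2
  rw [h2, hv1, zero_add]

lemma v_add_left {x y : M} (hx : x ≠ 0) (h : y = 0 ∨ ω.v x < ω.v y) :
    x + y ≠ 0 ∧ ω.v (x + y) = ω.v x := by
  rcases eq_or_ne y 0 with rfl | hy
  · simpa using hx
  rcases h with rfl | hlt
  · simpa using hx
  have hne : x + y ≠ 0 := by
    intro hsum
    have hxy : y = -x := by linear_combination hsum
    rw [hxy, v_neg] at hlt; exact lt_irrefl _ hlt
  refine ⟨hne, le_antisymm ?_ ?_⟩
  · have h3 : min (ω.v (x + y)) (ω.v (-y)) ≤ ω.v (x + y + -y) := by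
      apply ω.map_add'; simpa using hx
    rw [add_neg_cancel_right, v_neg] at h3
    rcases le_or_gt (ω.v (x+y)) (ω.v y) with h4 | h4
    · rwa [min_eq_left h4] at h3
    · rw [min_eq_right h4.le] at h3; linarith
  · exact le_trans (le_min (le_refl _) (le_of_lt hlt)) (ω.map_add' x y hne)

lemma v_sum_aux {ι : Type*} (S : Finset ι) (g : ι → M) (r : ℝ)
    (h : ∀ b ∈ S, g b = 0 ∨ r < ω.v (g b)) :
    (∑ b ∈ S, g b) = 0 ∨ r < ω.v (∑ b ∈ S, g b) := by
  classical
  induction S using Finset.induction_on with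
  | empty => simp
  | @insert b S hb ih =>
    rw [Finset.sum_insert hb]
    have hrest := ih (fun b hbS => h b (Finset.mem_insert_of_mem hbS))
    rcases h b (Finset.mem_insert_self _ _) with hb0 | hblt
    · rw [hb0, zero_add]; exact hrest
    rcases hrest with h0 | hlt
    · rw [h0, add_zero]; right; exact hblt
    rcases eq_or_ne (g b + ∑ x ∈ S, g x) 0 with hz | hnz
    · left; exact hz
    · right
      have := ω.map_add' _ _ hnz
      exact lt_of_lt_of_le (lt_min hblt hlt) this

lemma v_sum {ι : Type*} [DecidableEq ι] (S : Finset ι) (g : ι → M) {a : ι} (ha : a ∈ S)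
    (h0 : g a ≠ 0) (hlt : ∀ b ∈ S, b ≠ a → g b = 0 ∨ ω.v (g a) < ω.v (g b)) :
    (∑ b ∈ S, g b) ≠ 0 ∧ ω.v (∑ b ∈ S, g b) = ω.v (g a) := by
  have hsum : g a + ∑ b ∈ S.erase a, g b = ∑ b ∈ S, g b := Finset.add_sum_erase S g ha
  have haux := v_sum_aux ω (S.erase a) g (ω.v (g a))
    (fun b hb => hlt b (Finset.mem_of_mem_erase hb) (Finset.ne_of_mem_erase hb))
  have := v_add_left ω h0 (by
    rcases haux with h1 | h1
    · exact Or.inl h1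
    · exact Or.inr h1)
  rw [hsum] at this
  exact this

lemma v_pow {x : M} (hx : x ≠ 0) (n : ℕ) : ω.v (x ^ n) = n * ω.v x := by
  induction n with
  | zero => simp [ω.map_one']
  | succ n ih =>
    rw [pow_succ, ω.map_mul' _ _ (pow_ne_zero _ hx) hx, ih]
    push_cast; ring

lemma v_mul {x y : M} (hx : x ≠ 0) (hy : y ≠ 0) : ω.v (x * y) = ω.v x + ω.v y :=
  ω.map_mul' x y hx hy

lemma evSign (D : ℕ → ℝ) (h : StrictMono D ∨ StrictAnti D) :
    ∃ T, (∀ t ≥ T, D t < 0) ∨ (∀ t ≥ T, 0 < D t) := by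
  rcases h with hm | ha
  · by_cases hx : ∃ t, 0 ≤ D t
    · obtain ⟨t₀, ht₀⟩ := hx
      exact ⟨t₀ + 1, Or.inr fun t ht => lt_of_le_of_lt ht₀ (hm (by omega))⟩
    · push_neg at hx
      exact ⟨0, Or.inl fun t _ => hx t⟩
  · by_cases hx : ∃ t, D t ≤ 0
    · obtain ⟨t₀, ht₀⟩ := hx
      exact ⟨t₀ + 1, Or.inl fun t ht => lt_of_lt_of_le (ha (by omega)) ht₀⟩
    · push_neg at hx
      exact ⟨0, Or.inr fun t _ => hx t⟩

lemma line_mono {γ : ℕ → ℝ} (hγ : StrictMono γ) {sd : ℝ} (hsd : sd ≠ 0) (bd : ℝ) :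
    StrictMono (fun t => bd + sd * γ t) ∨ StrictAnti (fun t => bd + sd * γ t) := by
  rcases lt_or_gt_of_ne hsd with hneg | hpos
  · right; intro s t hst
    have := hγ hst
    simp only
    nlinarith
  · left; intro s t hst
    have := hγ hst
    simp only
    nlinarith

lemma lines (b s : ℕ → ℝ) (γ : ℕ → ℝ) (hγ : StrictMono γ) :
    ∀ S : Finset ℕ, S.Nonempty →
    (∀ j ∈ S, ∀ j' ∈ S, j ≠ j' → s j ≠ s j') →
    ∃ j₀ ∈ S, ∃ T, ∀ t ≥ T, ∀ j ∈ S, j ≠ j₀ →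
      b j₀ + s j₀ * γ t < b j + s j * γ t := by
  intro S
  classical
  induction S using Finset.induction_on with
  | empty => intro h; exact absurd h (by simp)
  | @insert a S ha ih =>
    intro _ hdist
    rcases S.eq_empty_or_nonempty with rfl | hS
    · exact ⟨a, by simp, 0, by intro t _ j hj hja; simp at hj; exact absurd hj hja⟩
    obtain ⟨j₀', hj₀'S, T', hT'⟩ := ih hS (fun j hj j' hj' hne =>
      hdist j (Finset.mem_insert_of_mem hj) j' (Finset.mem_insert_of_mem hj') hne)
    have haj : a ≠ j₀' := fun h => ha (h ▸ hj₀'S)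
    have hsne : s a - s j₀' ≠ 0 := sub_ne_zero.mpr
      (hdist a (Finset.mem_insert_self _ _) j₀' (Finset.mem_insert_of_mem hj₀'S) haj)
    obtain ⟨T'', hT''⟩ := evSign (fun t => (b a - b j₀') + (s a - s j₀') * γ t)
      (line_mono hγ hsne _)
    rcases hT'' with hneg | hpos
    · refine ⟨a, Finset.mem_insert_self _ _, max T' T'', fun t ht j hj hja2 => ?_⟩
      have hjS : j ∈ S := by
        rcases Finset.mem_insert.mp hj with rfl | h
        · exact absurd rfl hja2
        · exact h
      have h1 : b a + s a * γ t < b j₀' + s j₀' * γ t := by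
        have := hneg t (le_trans (le_max_right _ _) ht)
        nlinarith
      rcases eq_or_ne j j₀' with rfl | hjj
      · exact h1
      · exact lt_trans h1 (hT' t (le_trans (le_max_left _ _) ht) j hjS hjj)
    · refine ⟨j₀', Finset.mem_insert_of_mem hj₀'S, max T' T'', fun t ht j hj hjj => ?_⟩
      rcases Finset.mem_insert.mp hj with rfl | hjS
      · have := hpos t (le_trans (le_max_right _ _) ht)
        nlinarith
      · exact hT' t (le_trans (le_max_left _ _) ht) j hjS hjj

open Polynomial in
lemma adic_aux {K : Type*} [Field K] (h : K[X]) (hm : h.Monic) (hd : 1 ≤ h.natDegree) :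
    ∀ N : ℕ, ∀ F : K[X], F.natDegree ≤ N → ∃ G : ℕ → K[X],
      (∀ k, (G k).natDegree < h.natDegree ∨ G k = 0) ∧
      (∀ k, G k ≠ 0 → k * h.natDegree ≤ F.natDegree) ∧
      F = ∑ k ∈ Finset.range (F.natDegree + 1), G k * h ^ k := by
  intro N
  induction N using Nat.strong_induction_on with
  | _ N ih =>
  intro F hFN
  by_cases hFd : F.natDegree < h.natDegree
  · refine ⟨fun k => if k = 0 then F else 0, ?_, ?_, ?_⟩
    · intro k; by_cases hk : k = 0 <;> simp [hk, hFd]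
    · intro k hk; by_cases h0 : k = 0
      · simp [h0]
      · simp [h0] at hk
    · rw [Finset.sum_eq_single 0] <;> simp +contextual
  · push_neg at hFd
    have hhne : h ≠ 0 := hm.ne_zero
    set r := F %ₘ h with hr
    set q := F /ₘ h with hq
    have hF : r + h * q = F := modByMonic_add_div F h
    have hrdeg : r.natDegree < h.natDegree ∨ r = 0 := by
      rcases eq_or_ne r 0 with h0 | h0
      · exact Or.inr h0
      · exact Or.inl (natDegree_lt_natDegree h0 (degree_modByMonic_lt F hm))
    have hqdeg : q.natDegree = F.natDegree - h.natDegree := natDegree_divByMonic F hm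
    have hqlt : q.natDegree < N := by omega
    obtain ⟨G', hG'deg, hG'bd, hG'sum⟩ := ih q.natDegree hqlt q le_rfl
    refine ⟨fun k => if k = 0 then r else G' (k - 1), ?_, ?_, ?_⟩
    · intro k; by_cases hk : k = 0
      · simpa [hk] using hrdeg
      · simpa [hk] using hG'deg (k - 1)
    · intro k hk
      by_cases h0 : k = 0
      · simp [h0]
      · simp only [h0, if_neg] at hk
        have := hG'bd (k - 1) (by simpa [h0] using hk)
        have hk1 : k - 1 + 1 = k := by omega
        calc k * h.natDegree = (k - 1) * h.natDegree + h.natDegree := by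
              conv_lhs => rw [← hk1]
              rw [Nat.succ_mul]
          _ ≤ q.natDegree + h.natDegree := by omega
          _ ≤ F.natDegree := by omega
    · rw [Finset.sum_range_succ']
      simp only [if_pos rfl, pow_zero, mul_one]
      have hterm : ∀ k ∈ Finset.range F.natDegree,
          (if k + 1 = 0 then r else G' (k + 1 - 1)) * h ^ (k + 1) = h * (G' k * h ^ k) := by
        intro k _; simp [pow_succ]; ring
      rw [Finset.sum_congr rfl hterm, ← Finset.mul_sum]
      have hsub : ∑ k ∈ Finset.range F.natDegree, G' k * h ^ k
          = ∑ k ∈ Finset.range (q.natDegree + 1), G' k * h ^ k := by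
        symm
        apply Finset.sum_subset
        · intro k hk; simp only [Finset.mem_range] at *; omega
        · intro k _ hk
          simp only [Finset.mem_range, not_lt] at hk
          have : G' k = 0 := by
            by_contra hne
            have := hG'bd k hne
            nlinarith
          simp [this]
      rw [hsub, ← hG'sum]
      simp only [reduceIte]
      linear_combination -hF

end Erratic

section FieldLemmas

open Polynomial IntermediateField

variable {K L : Type*} [Field K] [Field L] [Algebra K L]

lemma Erratic.AS_natDegree (p : ℕ) (hp : p.Prime) (a : K) :
    ((X : K[X]) ^ p - X - C a).natDegree = p := by
  have h1 : (X ^ p : K[X]).degree = p := degree_X_pow p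
  have h2 : ((X : K[X]) + C a).degree ≤ 1 := by
    refine le_trans (degree_add_le _ _) (sup_le ?_ ?_)
    · simp [degree_X]
    · exact le_trans degree_C_le (by norm_num)
  have h3 : ((X : K[X]) + C a).degree < (X ^ p : K[X]).degree := by
    rw [h1]
    exact lt_of_le_of_lt h2 (by exact_mod_cast Nat.one_lt_cast.mpr hp.one_lt)
  have hdd : ((X : K[X]) ^ p - X - C a).degree = (X ^ p : K[X]).degree := by
    rw [show (X : K[X]) ^ p - X - C a = X ^ p - (X + C a) from by ring]
    exact degree_sub_eq_left_of_degree_lt h3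
  rw [natDegree_eq_of_degree_eq hdd, natDegree_X_pow]

lemma Erratic.AS_monic (p : ℕ) (hp : p.Prime) (a : K) :
    ((X : K[X]) ^ p - X - C a).Monic := by
  have hc : ((X : K[X]) ^ p - X - C a).coeff p = 1 := by
    have hne1 : ¬ (p = 1) := hp.one_lt.ne'
    have hne1' : ¬ (1 = p) := fun h => hne1 h.symm
    simp [coeff_X_pow, coeff_X, coeff_C, hp.ne_zero, hne1, hne1']
  rw [Monic.def, leadingCoeff, Erratic.AS_natDegree p hp a, hc]

lemma Erratic.minpoly_eq_AS (p : ℕ) (hp : p.Prime) [CharP K p]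
    (Θ : L) (hΘK : Θ ∉ Set.range (algebraMap K L))
    (a : K) (hAS : Θ ^ p - Θ = algebraMap K L a)
    (hdeg : Module.finrank K L = p) :
    minpoly K Θ = X ^ p - X - C a := by
  haveI : FiniteDimensional K L := FiniteDimensional.of_finrank_pos (by rw [hdeg]; exact hp.pos)
  have hint : IsIntegral K Θ := IsIntegral.of_finite K Θ
  set F : K[X] := X ^ p - X - C a with hF
  have hFdeg : F.natDegree = p := Erratic.AS_natDegree p hp a
  have hFmonic : F.Monic := Erratic.AS_monic p hp a
  have haev : Polynomial.aeval Θ F = 0 := by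
    simp only [hF, map_sub, map_pow, aeval_X, aeval_C]
    rw [← hAS]; ring
  have hdvd : minpoly K Θ ∣ F := minpoly.dvd K Θ haev
  have hmon : (minpoly K Θ).Monic := minpoly.monic hint
  have h1 : Module.finrank K ↥K⟮Θ⟯ = (minpoly K Θ).natDegree := IntermediateField.adjoin.finrank hint
  have h2 : Module.finrank K ↥K⟮Θ⟯ * Module.finrank ↥K⟮Θ⟯ L = p := by
    rw [Module.finrank_mul_finrank, hdeg]
  have hdvd2 : (minpoly K Θ).natDegree ∣ p := ⟨_, by rw [← h2, h1]⟩
  have hne1 : (minpoly K Θ).natDegree ≠ 1 := by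
    intro h1'
    have hq := eq_X_add_C_of_natDegree_le_one (le_of_eq h1')
    have hc1 : (minpoly K Θ).coeff 1 = 1 := by
      have := hmon.coeff_natDegree
      rwa [h1'] at this
    rw [hc1, map_one, one_mul] at hq
    have := minpoly.aeval K Θ
    rw [hq] at this
    simp only [map_add, aeval_X, aeval_C] at this
    exact hΘK ⟨-(minpoly K Θ).coeff 0, by rw [map_neg]; linear_combination -this⟩
  have hdegq : (minpoly K Θ).natDegree = p := by
    rcases (Nat.Prime.eq_one_or_self_of_dvd hp _ hdvd2) with h | h
    · exact absurd h hne1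
    · exact h
  obtain ⟨s, hs⟩ := hdvd
  have hFne : F ≠ 0 := hFmonic.ne_zero
  have hsne : s ≠ 0 := by rintro rfl; rw [mul_zero] at hs; exact hFne hs
  have hds : s.natDegree = 0 := by
    have := natDegree_mul (minpoly.ne_zero hint) hsne
    rw [← hs, hFdeg, hdegq] at this
    omega
  have hsmonic : s.Monic := by
    have hl : F.leadingCoeff = (minpoly K Θ).leadingCoeff * s.leadingCoeff := by
      rw [hs, leadingCoeff_mul]
    rw [hFmonic.leadingCoeff, hmon.leadingCoeff, one_mul] at hl
    exact hl.symm
  have : s = 1 := eq_one_of_monic_natDegree_zero hsmonic hds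
  rw [hs, this, mul_one]

lemma Erratic.sigma_exists (p : ℕ) (hp : p.Prime) [CharP K p]
    (Θ : L) (hΘK : Θ ∉ Set.range (algebraMap K L))
    (a : K) (hAS : Θ ^ p - Θ = algebraMap K L a)
    (hdeg : Module.finrank K L = p) :
    ∃ σ : L →ₐ[K] L, σ Θ = Θ + 1 := by
  haveI : FiniteDimensional K L := FiniteDimensional.of_finrank_pos (by rw [hdeg]; exact hp.pos)
  haveI : Fact p.Prime := ⟨hp⟩
  haveI : CharP L p := charP_of_injective_ringHom (algebraMap K L).injective p
  have hint : IsIntegral K Θ := IsIntegral.of_finite K Θ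
  have hminp := Erratic.minpoly_eq_AS p hp Θ hΘK a hAS hdeg
  have htop : K⟮Θ⟯ = ⊤ := by
    have h1 : Module.finrank K ↥K⟮Θ⟯ = (minpoly K Θ).natDegree := IntermediateField.adjoin.finrank hint
    have hdq : (minpoly K Θ).natDegree = p := by
      rw [hminp]; exact Erratic.AS_natDegree p hp a
    have hfr : Module.finrank K ↥K⟮Θ⟯ = Module.finrank K L := by rw [h1, hdq, hdeg]
    rw [eq_top_iff]
    intro x _
    have hsub : Subalgebra.toSubmodule K⟮Θ⟯.toSubalgebra = ⊤ := Submodule.eq_top_of_finrank_eq hfr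
    exact Submodule.eq_top_iff'.mp hsub x
  let e : ↥K⟮Θ⟯ ≃ₐ[K] L := (IntermediateField.equivOfEq htop).trans IntermediateField.topEquiv
  let pb := (IntermediateField.adjoin.powerBasis hint).map e
  have hgen : pb.gen = Θ := by
    show e (IntermediateField.adjoin.powerBasis hint).gen = Θ
    have h1 : ((IntermediateField.equivOfEq htop) (AdjoinSimple.gen K Θ) : L)
        = (AdjoinSimple.gen K Θ : L) := rfl
    calc (((IntermediateField.equivOfEq htop).trans IntermediateField.topEquiv)
            (IntermediateField.adjoin.powerBasis hint).gen : L)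
        = ((IntermediateField.equivOfEq htop) (IntermediateField.adjoin.powerBasis hint).gen : L) := rfl
      _ = Θ := by
          have hg : (IntermediateField.adjoin.powerBasis hint).gen = AdjoinSimple.gen K Θ := by
            simp [IntermediateField.adjoin.powerBasis]
          rw [hg, h1, AdjoinSimple.coe_gen]
  have hroot : Polynomial.aeval (Θ + 1) (minpoly K pb.gen) = 0 := by
    rw [hgen, hminp]
    simp only [map_sub, map_pow, aeval_X, aeval_C]
    rw [add_pow_char, one_pow, ← hAS]
    ring
  exact ⟨pb.lift (Θ + 1) hroot, by
    have := pb.lift_gen (Θ + 1) hroot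
    rwa [hgen] at this⟩

lemma Erratic.aeval_ne_AS (p : ℕ) (hp : p.Prime) [CharP K p]
    (Θ : L) (hΘK : Θ ∉ Set.range (algebraMap K L))
    (a : K) (hAS : Θ ^ p - Θ = algebraMap K L a)
    (hdeg : Module.finrank K L = p)
    (h : K[X]) (hne : h ≠ 0) (hd : h.natDegree < p) :
    Polynomial.aeval Θ h ≠ 0 := by
  haveI : FiniteDimensional K L := FiniteDimensional.of_finrank_pos (by rw [hdeg]; exact hp.pos)
  have hint : IsIntegral K Θ := IsIntegral.of_finite K Θ
  intro h0
  have hdvd := minpoly.dvd K Θ h0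
  have hle := Polynomial.natDegree_le_of_dvd hdvd hne
  have hdq : (minpoly K Θ).natDegree = p := by
    rw [Erratic.minpoly_eq_AS p hp Θ hΘK a hAS hdeg]; exact Erratic.AS_natDegree p hp a
  omega

lemma Erratic.hasse_map (i : K →+* L) (k : ℕ) (g : K[X]) :
    hasseDeriv k (g.map i) = (hasseDeriv k g).map i := by
  ext n; simp [hasseDeriv_coeff, coeff_map]

lemma Erratic.taylor_id (Θ : L) (h : K[X]) (x : K) :
    algebraMap K L (h.eval x) =
      ∑ j ∈ Finset.range (h.natDegree + 1),
        Polynomial.aeval Θ (hasseDeriv j h) * (algebraMap K L x - Θ) ^ j := by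
  set i := algebraMap K L
  have h1 : i (h.eval x) = (h.map i).eval (i x) := by
    rw [eval_map, eval₂_at_apply]
  have h2 : (h.map i).eval (i x) = ((taylor Θ (h.map i)).eval (i x - Θ)) := by
    rw [taylor_eval, sub_add_cancel]
  rw [h1, h2, eval_eq_sum_range, natDegree_taylor, natDegree_map]
  apply Finset.sum_congr rfl
  intro j _
  congr 1
  rw [taylor_coeff, Erratic.hasse_map, aeval_def, eval_map]

end FieldLemmas

open Erratic in
open Polynomial in
/-- For a polynomial `f ∈ K[x]` of degree `< p`, the values `ν (f (c t))` stabilize. -/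
theorem statement10
    (p : ℕ) (hp : p.Prime)
    (K : Type*) (L : Type*) [Field K] [Field L] [Algebra K L] [CharP K p]
    (Θ : L) (hΘK : Θ ∉ Set.range (algebraMap K L))
    (a : K) (hAS : Θ ^ p - Θ = algebraMap K L a)
    (hdeg : Module.finrank K L = p)
    (ω : RealValuation L)
    (huniq : UniqueExtensionFrom ω (Set.range (algebraMap K L)))
    (himm : ImmediateFrom ω (Set.range (algebraMap K L)))
    (c : ℕ → K)
    (hmono : StrictMono fun i => ω.v (Θ - algebraMap K L (c i)))
    (hcof : ∀ x : K, ∃ i, ω.v (Θ - algebraMap K L x) ≤ ω.v (Θ - algebraMap K L (c i)))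
    (f : Polynomial K) (hdegf : f.degree < (p : WithBot ℕ)) :
    ∃ t₀ : ℕ, ∀ t ≥ t₀,
      ω.v (algebraMap K L (f.eval (c t))) = ω.v (algebraMap K L (f.eval (c t₀))) := by
  classical
  haveI : Fact p.Prime := ⟨hp⟩
  haveI : CharP L p := charP_of_injective_ringHom (algebraMap K L).injective p
  rcases eq_or_ne f 0 with rfl | hfne
  · exact ⟨0, fun t _ => by simp⟩
  have hi : Function.Injective (algebraMap K L) := (algebraMap K L).injective
  have hΘc : ∀ x : K, Θ - algebraMap K L x ≠ 0 := fun x hx =>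
    hΘK ⟨x, by linear_combination -hx⟩
  have hcΘ : ∀ x : K, algebraMap K L x - Θ ≠ 0 := fun x hx =>
    hΘc x (by linear_combination -hx)
  have hvci : ∀ x : K, ω.v (algebraMap K L x - Θ) = ω.v (Θ - algebraMap K L x) := fun x => by
    rw [show algebraMap K L x - Θ = -(Θ - algebraMap K L x) from by ring, v_neg]
  -- the Artin-Schreier automorphism and negativity of the γ's
  obtain ⟨σ, hσΘ⟩ := Erratic.sigma_exists p hp Θ hΘK a hAS hdeg
  have hσinj : Function.Injective σ := σ.toRingHom.injective
  have hσv : ∀ z : L, ω.v (σ z) = ω.v z := by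
    have hσ0 : ∀ x : L, x ≠ 0 → σ x ≠ 0 := fun x hx h0 => hx (hσinj (by rw [h0, map_zero]))
    refine huniq
      { v := fun z => ω.v (σ z)
        map_zero' := by simp [ω.map_zero']
        map_one' := by simp [ω.map_one']
        map_mul' := fun x y hx hy => by
          simp only [map_mul]; exact ω.map_mul' _ _ (hσ0 x hx) (hσ0 y hy)
        map_add' := fun x y hxy => by
          show min (ω.v (σ x)) (ω.v (σ y)) ≤ ω.v (σ (x + y)); exact (map_add σ x y) ▸ ω.map_add' (σ x) (σ y)
            (by rw [← map_add]; exact hσ0 _ hxy) }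
      ?_
    rintro z ⟨x, rfl⟩
    simp only
    rw [AlgHom.commutes]
  have hγneg : ∀ t, ω.v (Θ - algebraMap K L (c t)) < 0 := by
    by_contra hcon; push_neg at hcon
    obtain ⟨T, hT⟩ := hcon
    have hpos : 0 < ω.v (Θ - algebraMap K L (c (T+1))) :=
      lt_of_le_of_lt hT (hmono (Nat.lt_succ_self T))
    set z := Θ - algebraMap K L (c (T+1)) with hz
    have hzne : z ≠ 0 := hΘc _
    have h1 : ω.v ((1 : L) + z) = ω.v (1 : L) :=
      (v_add_left ω one_ne_zero (Or.inr (by rw [ω.map_one']; exact hpos))).2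
    have h2 : σ z = 1 + z := by
      rw [hz, map_sub, hσΘ, AlgHom.commutes]; ring
    have h3 := hσv z
    rw [h2, h1, ω.map_one'] at h3
    exact absurd h3.symm (ne_of_gt hpos)
  -- value of the Artin-Schreier polynomial along the sequence
  have hF_eval : ∀ t, ω.v (algebraMap K L (((X : K[X])^p - X - C a).eval (c t)))
      = p * ω.v (Θ - algebraMap K L (c t)) := by
    intro t
    set x := algebraMap K L (c t) - Θ with hx
    have hxne : x ≠ 0 := hcΘ _
    have hΘp : Θ^p = Θ + algebraMap K L a := by linear_combination hAS
    have hge : algebraMap K L (((X : K[X])^p - X - C a).eval (c t)) = x^p + (-x) := by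
      simp only [eval_sub, eval_pow, eval_X, eval_C, map_sub, map_pow]
      rw [hx, sub_pow_char, hΘp]
      ring
    have hvx : ω.v x = ω.v (Θ - algebraMap K L (c t)) := hvci _
    have h1 : ω.v (x^p) = p * ω.v x := v_pow ω hxne p
    have hlt : ω.v (x^p) < ω.v (-x) := by
      rw [h1, v_neg, hvx]
      have := hγneg t
      have hp2 : (2:ℝ) ≤ p := by exact_mod_cast hp.two_le
      nlinarith
    rw [hge, (v_add_left ω (pow_ne_zero p hxne) (Or.inr hlt)).2, h1, hvx]
  -- the main induction
  have good : ∀ d, 2 ≤ d → d ≤ p → ∀ h : K[X], h ≠ 0 → h.natDegree < d →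
      ∃ T, ∀ t ≥ T, h.eval (c t) ≠ 0 ∧
        ω.v (algebraMap K L (h.eval (c t))) = ω.v (Polynomial.aeval Θ h) := by
    intro d hd2
    induction d, hd2 using Nat.le_induction with
    | base =>
      intro _ h hne hdlt
      rcases (by omega : h.natDegree = 0 ∨ h.natDegree = 1) with h0 | h1
      · -- constant
        have hC := Polynomial.eq_C_of_natDegree_eq_zero h0
        have hc0 : h.coeff 0 ≠ 0 := fun hh => hne (by rw [hC, hh, map_zero])
        refine ⟨0, fun t _ => ?_⟩
        constructor
        · rw [hC, eval_C]; exact hc0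
        · rw [hC, eval_C, aeval_C]
      · -- linear
        set b1 := h.coeff 1 with hb1def
        set b0 := h.coeff 0 with hb0def
        have hb1 : b1 ≠ 0 := by
          have hlc : h.coeff 1 = h.leadingCoeff := by rw [leadingCoeff, h1]
          rw [hb1def, hlc]
          exact leadingCoeff_ne_zero.mpr hne
        have hC := Polynomial.eq_X_add_C_of_natDegree_le_one (le_of_eq h1)
        set bb := -(b0 / b1) with hbb
        have hbbmul : b1 * bb = -b0 := by rw [hbb]; field_simp
        have heval : ∀ x : K, h.eval x = b1 * (x - bb) := by
          intro x
          conv_lhs => rw [hC]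
          rw [eval_add, eval_mul, eval_C, eval_X, eval_C]
          linear_combination hbbmul
        have haev : Polynomial.aeval Θ h = algebraMap K L b1 * (Θ - algebraMap K L bb) := by
          conv_lhs => rw [hC]
          simp only [map_add, map_mul, aeval_X, aeval_C]
          have hb0e : (algebraMap K L) b0 = - (algebraMap K L b1 * algebraMap K L bb) := by
            rw [← map_mul, ← map_neg]
            congr 1
            linear_combination hbbmul
          rw [hb0e]; ring
        have hib1 : algebraMap K L b1 ≠ 0 := fun hh => hb1 (hi (by rw [hh, map_zero]))
        obtain ⟨T0, hT0⟩ := hcof bb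
        refine ⟨T0 + 1, fun t ht => ?_⟩
        have hγt : ω.v (Θ - algebraMap K L bb) < ω.v (Θ - algebraMap K L (c t)) :=
          lt_of_le_of_lt hT0 (hmono (by omega : T0 < t))
        have hkey : (Θ - algebraMap K L bb) + (-(Θ - algebraMap K L (c t)))
            = algebraMap K L (c t) - algebraMap K L bb := by ring
        have hv := v_add_left ω (hΘc bb) (Or.inr (by rw [v_neg]; exact hγt))
        rw [hkey] at hv
        have hevalL : algebraMap K L (h.eval (c t))
            = algebraMap K L b1 * (algebraMap K L (c t) - algebraMap K L bb) := by
          rw [heval, map_mul, map_sub]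
        constructor
        · intro h0'
          have : algebraMap K L (h.eval (c t)) ≠ 0 := by
            rw [hevalL]; exact mul_ne_zero hib1 hv.1
          exact this (by rw [h0', map_zero])
        · rw [hevalL, v_mul ω hib1 hv.1, hv.2, haev, v_mul ω hib1 (hΘc bb)]
    | succ d hd2 ih =>
      intro hdp h hne hdlt
      rcases Nat.lt_succ_iff_lt_or_eq.mp hdlt with hlt | hdd
      · exact ih (by omega) h hne hlt
      -- h has degree exactly d, 2 ≤ d < p
      have hdltp : d < p := by omega
      set J₁ := (Finset.Icc 1 d).filter (fun j => hasseDeriv j h ≠ 0) with hJ₁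
      have hlc : h.coeff d ≠ 0 := by
        rw [← hdd, coeff_natDegree]; exact leadingCoeff_ne_zero.mpr hne
      have hhd : hasseDeriv d h ≠ 0 := by
        intro h0
        apply hlc
        have h1 := hasseDeriv_coeff d h 0
        rw [h0, coeff_zero] at h1
        rw [zero_add, Nat.choose_self, Nat.cast_one, one_mul] at h1
        exact h1.symm
      have hdJ : d ∈ J₁ := by
        rw [hJ₁, Finset.mem_filter, Finset.mem_Icc]
        exact ⟨⟨by omega, le_refl d⟩, hhd⟩
      have h0J : (0 : ℕ) ∉ J₁ := by
        rw [hJ₁, Finset.mem_filter, Finset.mem_Icc]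
        simp
      have hAne : Polynomial.aeval Θ h ≠ 0 :=
        Erratic.aeval_ne_AS p hp Θ hΘK a hAS hdeg h hne (by omega)
      have hAjne : ∀ j ∈ J₁, Polynomial.aeval Θ (hasseDeriv j h) ≠ 0 := by
        intro j hj
        rw [hJ₁, Finset.mem_filter, Finset.mem_Icc] at hj
        refine Erratic.aeval_ne_AS p hp Θ hΘK a hAS hdeg _ hj.2 ?_
        have := natDegree_hasseDeriv_le h j
        omega
      set β : ℕ → ℝ := fun j => ω.v (Polynomial.aeval Θ (hasseDeriv j h)) with hβ
      set g : ℕ → ℕ → L := fun t j =>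
        Polynomial.aeval Θ (hasseDeriv j h) * (algebraMap K L (c t) - Θ) ^ j with hg
      have hg0 : ∀ t, g t 0 = Polynomial.aeval Θ h := by
        intro t
        simp only [hg]
        simp [hasseDeriv_zero]
      have htay : ∀ t, algebraMap K L (h.eval (c t)) = ∑ j ∈ insert 0 J₁, g t j := by
        intro t
        simp only [hg]
        rw [Erratic.taylor_id Θ h (c t)]
        have hr : Finset.range (h.natDegree + 1) = insert 0 (Finset.Icc 1 d) := by
          ext j
          simp only [Finset.mem_range, Finset.mem_insert, Finset.mem_Icc, hdd]
          omega
        rw [hr, Finset.sum_insert (by simp), Finset.sum_insert h0J]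
        congr 1
        rw [hJ₁]
        refine (Finset.sum_filter_of_ne ?_).symm
        intro j _ hne0 h0
        exact hne0 (by rw [h0, map_zero, zero_mul])
      have hterm : ∀ t, ∀ j ∈ J₁, g t j ≠ 0 ∧
          ω.v (g t j) = β j + j * ω.v (Θ - algebraMap K L (c t)) := by
        intro t j hj
        have h1 := hAjne j hj
        have h2 : (algebraMap K L (c t) - Θ) ^ j ≠ 0 := pow_ne_zero _ (hcΘ _)
        refine ⟨mul_ne_zero h1 h2, ?_⟩
        simp only [hg]
        rw [v_mul ω h1 h2, v_pow ω (hcΘ _) j, hvci]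
      obtain ⟨j₀, hj₀J, T₁, hlines⟩ := lines β (fun j => (j:ℝ))
        (fun t => ω.v (Θ - algebraMap K L (c t))) hmono J₁ ⟨d, hdJ⟩
        (fun j _ j' _ hne' => by exact_mod_cast hne')
      have hj₀Icc : 1 ≤ j₀ ∧ j₀ ≤ d := by
        rw [hJ₁, Finset.mem_filter, Finset.mem_Icc] at hj₀J
        exact hj₀J.1
      set μ : ℕ → ℝ := fun t => β j₀ + j₀ * ω.v (Θ - algebraMap K L (c t)) with hμ
      have hμmono : StrictMono μ := by
        intro s t hst
        have h1 := hmono hst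
        have h2 : (1:ℝ) ≤ (j₀:ℝ) := by exact_mod_cast hj₀Icc.1
        simp only [hμ] at *
        nlinarith
      by_cases hcase : ∃ t, T₁ ≤ t ∧ ω.v (Polynomial.aeval Θ h) < μ t
      · -- stable case
        obtain ⟨ta, hta, hα⟩ := hcase
        refine ⟨ta, fun t ht => ?_⟩
        have hμle : μ ta ≤ μ t := hμmono.monotone ht
        have hsum := v_sum ω (insert 0 J₁) (g t) (Finset.mem_insert_self 0 _)
          (by rw [hg0]; exact hAne)
          (by
            intro b hb hbne
            have hbJ : b ∈ J₁ := by
              rcases Finset.mem_insert.mp hb with rfl | hbJ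
              · exact absurd rfl hbne
              · exact hbJ
            refine Or.inr ?_
            rw [hg0, (hterm t b hbJ).2]
            rcases eq_or_ne b j₀ with rfl | hbj₀
            · calc ω.v (Polynomial.aeval Θ h) < μ ta := hα
                _ ≤ μ t := hμle
                _ = β b + b * ω.v (Θ - algebraMap K L (c t)) := by rw [hμ]
            · calc ω.v (Polynomial.aeval Θ h) < μ ta := hα
                _ ≤ μ t := hμle
                _ = β j₀ + j₀ * ω.v (Θ - algebraMap K L (c t)) := by rw [hμ]
                _ < β b + b * ω.v (Θ - algebraMap K L (c t)) :=
                  hlines t (le_trans hta ht) b hbJ hbj₀)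
        rw [← htay t] at hsum
        refine ⟨fun h0 => hsum.1 (by rw [h0, map_zero]), ?_⟩
        rw [hsum.2, hg0]
      · -- contradiction case
        exfalso
        push_neg at hcase
        have hμα : ∀ t, T₁ ≤ t → μ t < ω.v (Polynomial.aeval Θ h) := by
          intro t ht
          exact lt_of_lt_of_le (hμmono (Nat.lt_succ_self t)) (hcase (t+1) (by omega))
        have hbadv : ∀ t, T₁ ≤ t → h.eval (c t) ≠ 0 ∧
            ω.v (algebraMap K L (h.eval (c t))) = μ t := by
          intro t ht
          have hsum := v_sum ω (insert 0 J₁) (g t) (Finset.mem_insert_of_mem hj₀J)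
            (hterm t j₀ hj₀J).1
            (by
              intro b hb hbne
              rcases Finset.mem_insert.mp hb with rfl | hbJ
              · refine Or.inr ?_
                rw [hg0, (hterm t j₀ hj₀J).2]
                exact hμα t ht
              · refine Or.inr ?_
                rw [(hterm t j₀ hj₀J).2, (hterm t b hbJ).2]
                exact hlines t ht b hbJ hbne)
          rw [← htay t] at hsum
          refine ⟨fun h0 => hsum.1 (by rw [h0, map_zero]), ?_⟩
          rw [hsum.2, (hterm t j₀ hj₀J).2, hμ]
        -- normalize h to a monic polynomial
        have hlcne : h.leadingCoeff ≠ 0 := leadingCoeff_ne_zero.mpr hne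
        set u := h.leadingCoeff⁻¹ with hu
        have hune : u ≠ 0 := inv_ne_zero hlcne
        set ht' : K[X] := h * Polynomial.C u with hht'
        have hmon : ht'.Monic := monic_mul_leadingCoeff_inv hne
        have htd : ht'.natDegree = d := by
          rw [hht', natDegree_mul hne (by simpa using hune), natDegree_C, add_zero, hdd]
        have hiu : algebraMap K L u ≠ 0 := fun hh => hune (hi (by rw [hh, map_zero]))
        have htval : ∀ t, T₁ ≤ t → ht'.eval (c t) ≠ 0 ∧
            ω.v (algebraMap K L (ht'.eval (c t)))
              = (β j₀ + ω.v (algebraMap K L u)) + j₀ * ω.v (Θ - algebraMap K L (c t)) := by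
          intro t ht
          obtain ⟨h1, h2⟩ := hbadv t ht
          have hie : algebraMap K L (h.eval (c t)) ≠ 0 :=
            fun hh => h1 (hi (by rw [hh, map_zero]))
          constructor
          · rw [hht', eval_mul, eval_C]; exact mul_ne_zero h1 hune
          · rw [hht', eval_mul, eval_C, map_mul, v_mul ω hie hiu, h2, hμ]
            ring
        set F : K[X] := X^p - X - C a with hFdef
        have hFdeg : F.natDegree = p := Erratic.AS_natDegree p hp a
        obtain ⟨G, hGdeg, hGbd, hGsum⟩ := adic_aux ht' hmon (by omega) F.natDegree F le_rfl
        set S' := (Finset.range (F.natDegree + 1)).filter (fun k => G k ≠ 0) with hS'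
        have hS'ne : S'.Nonempty := by
          by_contra hemp
          rw [Finset.not_nonempty_iff_eq_empty] at hemp
          have hF0 : F = 0 := by
            rw [hGsum]
            apply Finset.sum_eq_zero
            intro k hk
            have hGk : G k = 0 := by
              by_contra hG0
              have hmem : k ∈ S' := by rw [hS', Finset.mem_filter]; exact ⟨hk, hG0⟩
              rw [hemp] at hmem
              simp at hmem
            rw [hGk, zero_mul]
          have : F.natDegree = 0 := by rw [hF0]; simp
          omega
        have hGkey : ∀ k : ℕ, ∃ T, k ∈ S' → ∀ t ≥ T, (G k).eval (c t) ≠ 0 ∧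
            ω.v (algebraMap K L ((G k).eval (c t))) = ω.v (Polynomial.aeval Θ (G k)) := by
          intro k
          by_cases hk : k ∈ S'
          · have hGne : G k ≠ 0 := (Finset.mem_filter.mp hk).2
            have hGd : (G k).natDegree < d := by
              rcases hGdeg k with hlt' | h0
              · rwa [htd] at hlt'
              · exact absurd h0 hGne
            obtain ⟨T, hT⟩ := ih (by omega) (G k) hGne hGd
            exact ⟨T, fun _ => hT⟩
          · exact ⟨0, fun hk' => absurd hk' hk⟩
        choose Tf hTf using hGkey
        set T₂ := S'.sup Tf with hT₂def
        set δ : ℕ → ℝ := fun k => ω.v (Polynomial.aeval Θ (G k)) with hδ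
        obtain ⟨k₀, hk₀S, T₃, hlines2⟩ := lines
          (fun k => δ k + k * (β j₀ + ω.v (algebraMap K L u)))
          (fun k => (k : ℝ) * j₀)
          (fun t => ω.v (Θ - algebraMap K L (c t))) hmono S' hS'ne
          (fun k _ k' _ hne' heq' => by
            have hj₀pos : (0:ℝ) < (j₀:ℝ) := by exact_mod_cast hj₀Icc.1
            exact hne' (by exact_mod_cast mul_right_cancel₀ (ne_of_gt hj₀pos) heq'))
        set T := max (max T₁ T₂) T₃ with hT
        have hFv : ∀ t, T ≤ t →
            (p:ℝ) * ω.v (Θ - algebraMap K L (c t))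
              = (δ k₀ + k₀ * (β j₀ + ω.v (algebraMap K L u)))
                + ((k₀:ℝ) * j₀) * ω.v (Θ - algebraMap K L (c t)) := by
          intro t htle
          have ht1 : T₁ ≤ t := le_trans (le_trans (le_max_left _ _) (le_max_left _ _)) htle
          have ht2 : T₂ ≤ t := le_trans (le_trans (le_max_right _ _) (le_max_left _ _)) htle
          have ht3 : T₃ ≤ t := le_trans (le_max_right _ _) htle
          set gF : ℕ → L := fun k =>
            algebraMap K L ((G k).eval (c t)) * (algebraMap K L (ht'.eval (c t))) ^ k with hgF
          have hterm2 : ∀ k ∈ S', gF k ≠ 0 ∧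
              ω.v (gF k) = (δ k + k * (β j₀ + ω.v (algebraMap K L u)))
                + ((k:ℝ) * j₀) * ω.v (Θ - algebraMap K L (c t)) := by
            intro k hk
            have hGk := hTf k hk t (le_trans (Finset.le_sup hk) ht2)
            have hGie : algebraMap K L ((G k).eval (c t)) ≠ 0 :=
              fun hh => hGk.1 (hi (by rw [hh, map_zero]))
            have htv := htval t ht1
            have htie : algebraMap K L (ht'.eval (c t)) ≠ 0 :=
              fun hh => htv.1 (hi (by rw [hh, map_zero]))
            refine ⟨mul_ne_zero hGie (pow_ne_zero _ htie), ?_⟩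
            rw [hgF]
            simp only
            rw [v_mul ω hGie (pow_ne_zero _ htie), v_pow ω htie k, hGk.2, htv.2, hδ]
            ring
          have hsumeval : algebraMap K L (F.eval (c t)) = ∑ k ∈ S', gF k := by
            have h1 : F.eval (c t) = ∑ k ∈ Finset.range (F.natDegree + 1),
                (G k).eval (c t) * (ht'.eval (c t)) ^ k := by
              conv_lhs => rw [hGsum]
              rw [eval_finset_sum]
              exact Finset.sum_congr rfl (fun k _ => by rw [eval_mul, eval_pow])
            have h2 : ∑ k ∈ Finset.range (F.natDegree + 1),
                (G k).eval (c t) * (ht'.eval (c t)) ^ k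
                = ∑ k ∈ S', (G k).eval (c t) * (ht'.eval (c t)) ^ k := by
              rw [hS']
              refine (Finset.sum_filter_of_ne ?_).symm
              intro k _ hne0 hG0
              exact hne0 (by rw [hG0, eval_zero, zero_mul])
            rw [h1, h2, map_sum]
            exact Finset.sum_congr rfl (fun k _ => by rw [hgF]; simp [map_mul, map_pow])
          have hsum := v_sum ω S' gF hk₀S (hterm2 k₀ hk₀S).1
            (fun b hb hbne => Or.inr (by
              rw [(hterm2 b hb).2, (hterm2 k₀ hk₀S).2]
              exact hlines2 t ht3 b hb hbne))
          have hveq : ω.v (algebraMap K L (F.eval (c t)))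
              = (δ k₀ + k₀ * (β j₀ + ω.v (algebraMap K L u)))
                + ((k₀:ℝ) * j₀) * ω.v (Θ - algebraMap K L (c t)) := by
            rw [hsumeval, hsum.2, (hterm2 k₀ hk₀S).2]
          rw [← hveq, hFdef]
          exact (hF_eval t).symm
        have e1 := hFv T le_rfl
        have e2 := hFv (T+1) (by omega)
        have hγne : ω.v (Θ - algebraMap K L (c T)) ≠ ω.v (Θ - algebraMap K L (c (T+1))) :=
          ne_of_lt (hmono (Nat.lt_succ_self T))
        have h3 : ((p:ℝ) - (k₀:ℝ)*(j₀:ℝ)) *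
            (ω.v (Θ - algebraMap K L (c (T+1))) - ω.v (Θ - algebraMap K L (c T))) = 0 := by
          linear_combination e2 - e1
        have hcast : (p:ℝ) = (k₀:ℝ) * (j₀:ℝ) := by
          rcases mul_eq_zero.mp h3 with h4 | h4
          · linarith
          · exact absurd (by linarith : ω.v (Θ - algebraMap K L (c (T+1)))
              = ω.v (Θ - algebraMap K L (c T))) (Ne.symm hγne)
        have hnat : p = k₀ * j₀ := by exact_mod_cast hcast
        have hj₀dvd : j₀ ∣ p := ⟨k₀, by rw [hnat, mul_comm]⟩
        rcases hp.eq_one_or_self_of_dvd j₀ hj₀dvd with hj1 | hjp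
        · have hk₀p : k₀ = p := by rw [hj1, mul_one] at hnat; omega
          have hbd := hGbd k₀ (Finset.mem_filter.mp hk₀S).2
          rw [htd, hFdeg, hk₀p] at hbd
          have hd1 : d ≤ 1 := Nat.le_of_mul_le_mul_left
            (by calc p * d ≤ p := hbd
                _ = p * 1 := (mul_one p).symm) hp.pos
          omega
        · omega
  -- conclude
  have hfd : f.natDegree < p := (Polynomial.natDegree_lt_iff_degree_lt hfne).mpr hdegf
  obtain ⟨T, hT⟩ := good p hp.two_le le_rfl f hfne hfd
  exact ⟨T, fun t ht => by rw [(hT t ht).2, (hT T le_rfl).2]⟩
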